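/- Let K ≥ 2, let ε > 0, and let Δ_1, …, Δ_K be real numbers with 0 = Δ_1 < Δ_2 ≤ Δ_3 ≤ ⋯ ≤ Δ_K. Then ∑_{r=1}^{∞} ∑_{j=1}^{K} 2^r·Δ_j·exp(−2^r·Δ_j·ε) / (∑_{i=1}^{K} exp(−2^r·Δ_i·ε)) ≤ (1 + 1/log 2)·(log K)/ε. -/

import Mathlib

/-!
Write `Z(t) = ∑ᵢ exp(-t Δᵢ ε)`. Jensen's inequality for `exp` under the softmax weights at scale
`2t` gives `2t · 𝔼_{2t}[Δ] ≤ (2/ε) (log Z(t) - log Z(2t))`, so the sum over the epochs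
`t = 2, 4, 8, …` telescopes to at most `(2/ε) log Z(1) ≤ (2/ε) log K`, using `Z ≥ 1` (from
`Δ₁ = 0`) and `Z(1) ≤ K` (from `Δ ≥ 0`). Finally `2 ≤ 1 + 1/log 2` because `log 2 ≤ 1`.
-/

open Real Finset

section Partition

variable {ι : Type*} [Fintype ι] (x : ι → ℝ) (ε : ℝ)

noncomputable def partitionFn (t : ℝ) : ℝ := ∑ i, exp (-(t * x i * ε))

variable {x ε}

lemma partitionFn_pos [Nonempty ι] (t : ℝ) : 0 < partitionFn x ε t :=
  sum_pos (fun _ _ => exp_pos _) univ_nonempty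

lemma one_le_partitionFn {i₀ : ι} (hi₀ : x i₀ = 0) (t : ℝ) : 1 ≤ partitionFn x ε t := by
  rw [partitionFn]
  simpa [hi₀] using single_le_sum (f := fun i => exp (-(t * x i * ε)))
    (fun i _ => (exp_pos _).le) (mem_univ i₀)

lemma partitionFn_le_card (hx : ∀ i, 0 ≤ x i) (hε : 0 ≤ ε) {t : ℝ} (ht : 0 ≤ t) :
    partitionFn x ε t ≤ Fintype.card ι := by
  calc partitionFn x ε t ≤ ∑ _i : ι, (1 : ℝ) :=
        sum_le_sum fun i _ => exp_le_one_iff.mpr <| neg_nonpos.mpr <| by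
          have := hx i; positivity
    _ = Fintype.card ι := by simp

/-- Jensen for `exp` under the softmax weights at scale `b`; equivalently, `log ∘ partitionFn`
is convex with slope `-ε 𝔼_b[x]` at `b`. -/
lemma sub_mul_sum_softmax_le_log_partitionFn_sub [Nonempty ι] (a b : ℝ) :
    (b - a) * ε * ∑ j, x j * exp (-(b * x j * ε)) / partitionFn x ε b ≤
      log (partitionFn x ε a) - log (partitionFn x ε b) := by
  have hZa := partitionFn_pos (x := x) (ε := ε) a
  have hZb := partitionFn_pos (x := x) (ε := ε) b
  set w : ι → ℝ := fun j => exp (-(b * x j * ε)) / partitionFn x ε b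
  have hw₀ : ∀ j ∈ univ, 0 ≤ w j := fun j _ => div_nonneg (exp_pos _).le hZb.le
  have hw₁ : ∑ j, w j = 1 := by rw [← sum_div]; exact div_self hZb.ne'
  have jensen := convexOn_exp.map_sum_le (p := fun j => (b - a) * x j * ε) hw₀ hw₁
    fun j _ => Set.mem_univ _
  have hmean : ∑ j, w j • ((b - a) * x j * ε) =
      (b - a) * ε * ∑ j, x j * exp (-(b * x j * ε)) / partitionFn x ε b := by
    rw [mul_sum]; refine sum_congr rfl fun j _ => ?_
    simp only [w, smul_eq_mul]; ring
  have hratio : ∑ j, w j • exp ((b - a) * x j * ε) = partitionFn x ε a / partitionFn x ε b := by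
    rw [partitionFn, sum_div]; refine sum_congr rfl fun j _ => ?_
    simp only [w, smul_eq_mul, div_mul_eq_mul_div, ← exp_add]; ring_nf
  rw [hmean, hratio] at jensen
  rw [← log_div hZa.ne' hZb.ne']
  exact (le_log_iff_exp_le (div_pos hZa hZb)).mpr jensen

end Partition

section Doubling

variable {ι : Type*} [Fintype ι] [Nonempty ι] {x : ι → ℝ} {ε : ℝ}

lemma sum_softmax_double_le (hε : 0 < ε) (t : ℝ) :
    ∑ j, 2 * t * x j * exp (-(2 * t * x j * ε)) / partitionFn x ε (2 * t) ≤
      2 / ε * (log (partitionFn x ε t) - log (partitionFn x ε (2 * t))) := by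
  have key := sub_mul_sum_softmax_le_log_partitionFn_sub (x := x) (ε := ε) t (2 * t)
  calc ∑ j, 2 * t * x j * exp (-(2 * t * x j * ε)) / partitionFn x ε (2 * t)
      = 2 / ε * ((2 * t - t) * ε *
          ∑ j, x j * exp (-(2 * t * x j * ε)) / partitionFn x ε (2 * t)) := by
        rw [mul_sum, mul_sum]; refine sum_congr rfl fun j _ => ?_
        field_simp; ring
    _ ≤ _ := by gcongr

lemma sum_range_softmax_doubling_le (hx : ∀ i, 0 ≤ x i) {i₀ : ι} (hi₀ : x i₀ = 0) (hε : 0 < ε)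
    (n : ℕ) :
    ∑ r ∈ range n, ∑ j, (2 : ℝ) ^ (r + 1) * x j * exp (-((2 : ℝ) ^ (r + 1) * x j * ε)) /
        partitionFn x ε (2 ^ (r + 1)) ≤ 2 * log (Fintype.card ι) / ε := by
  set L : ℕ → ℝ := fun r => log (partitionFn x ε (2 ^ r))
  have hL₀ : L 0 ≤ log (Fintype.card ι) :=
    log_le_log (partitionFn_pos _) (partitionFn_le_card hx hε.le (by positivity))
  have hLn : 0 ≤ L n := log_nonneg (one_le_partitionFn hi₀ _)
  calc _ ≤ ∑ r ∈ range n, 2 / ε * (L r - L (r + 1)) := sum_le_sum fun r _ => by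
        simpa only [L, pow_succ'] using sum_softmax_double_le hε (2 ^ r)
    _ = 2 / ε * (L 0 - L n) := by rw [← mul_sum, sum_range_sub' L n]
    _ ≤ 2 / ε * log (Fintype.card ι) := by gcongr; linarith
    _ = 2 * log (Fintype.card ι) / ε := by ring

lemma tsum_softmax_doubling_le (hx : ∀ i, 0 ≤ x i) {i₀ : ι} (hi₀ : x i₀ = 0) (hε : 0 < ε) :
    ∑' r : ℕ, ∑ j, (2 : ℝ) ^ (r + 1) * x j * exp (-((2 : ℝ) ^ (r + 1) * x j * ε)) /
        partitionFn x ε (2 ^ (r + 1)) ≤ 2 * log (Fintype.card ι) / ε :=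
  tsum_le_of_sum_range_le
    (fun r => sum_nonneg fun j _ => by
      have := hx j
      have := partitionFn_pos (x := x) (ε := ε) (2 ^ (r + 1))
      positivity)
    (sum_range_softmax_doubling_le hx hi₀ hε)

end Doubling

lemma two_le_one_add_one_div_log_two : (2 : ℝ) ≤ 1 + 1 / log 2 := by
  have : log 2 ≤ 1 := by linarith [log_le_sub_one_of_pos (by norm_num : (0 : ℝ) < 2)]
  have : 1 ≤ 1 / log 2 := by rw [le_div_iff₀ (log_pos one_lt_two)]; linarith
  linarith

/-- The analytic core of the optimal `O((log K)/ε)` regret bound for the exponential mechanism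
in the deterministic setting: if `0 = Δ 1 < Δ 2 ≤ ⋯ ≤ Δ K` (1-based indices) and `ε > 0`, then
`∑_{r=1}^∞ ∑_j 2^r * Δ j * exp(-2^r * Δ j * ε) / (∑ i, exp(-2^r * Δ i * ε))
  ≤ (1 + 1/log 2) * (log K) / ε`. -/
theorem tsum_softmax_regret_le (K : ℕ) (hK : 2 ≤ K) (ε : ℝ) (hε : 0 < ε) (Δ : Fin K → ℝ)
    (h0 : Δ ⟨0, by omega⟩ = 0) (h1 : 0 < Δ ⟨1, hK⟩)
    (hmono : ∀ i j : Fin K, 1 ≤ (i : ℕ) → i ≤ j → Δ i ≤ Δ j) :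
    (∑' r : ℕ, ∑ j,
        (2 : ℝ) ^ (r + 1) * Δ j * Real.exp (-((2 : ℝ) ^ (r + 1) * Δ j * ε)) /
          (∑ i, Real.exp (-((2 : ℝ) ^ (r + 1) * Δ i * ε)))) ≤
      (1 + 1 / Real.log 2) * Real.log K / ε := by
  have hΔ : ∀ j : Fin K, 0 ≤ Δ j := by
    intro j
    rcases Nat.eq_zero_or_pos j with hj | hj
    · rw [show j = ⟨0, by omega⟩ from Fin.ext hj, h0]
    · exact h1.le.trans (hmono _ j le_rfl hj)
  have : Nonempty (Fin K) := ⟨⟨0, by omega⟩⟩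
  have hlogK : 0 ≤ log K := log_nonneg (by exact_mod_cast (by omega : 1 ≤ K))
  calc _ ≤ 2 * log (Fintype.card (Fin K)) / ε := tsum_softmax_doubling_le hΔ h0 hε
    _ = 2 * log K / ε := by rw [Fintype.card_fin]
    _ ≤ _ := by gcongr; exact two_le_one_add_one_div_log_two
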